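/- Let G=(V,E) be a finite simple graph, let P_1,…,P_ℓ be a partition of V, and let α > 0 be such that for every i and every S ⊆ P_i with |S| ≤ |P_i|/2 one has |∂_{G[P_i]}(S)| ≥ α|S|. If U ⊆ V is sparse (the vertex set of every connected component of G[U] satisfies |γ ∩ P_i| ≤ |P_i|/2 for all i), then for every i ∈ [ℓ]: |∂_{G[P_i]}(U ∩ P_i)| ≥ α·|U ∩ P_i|. -/

import Mathlib

open Classical

noncomputable section

namespace Paper

variable {V : Type*}

/-- The degree of a vertex. -/
def deg (G : SimpleGraph V) (v : V) : ℕ := (G.neighborSet v).ncard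

/-- The volume of a vertex set: the sum of the degrees of its vertices. -/
def vol (G : SimpleGraph V) (S : Set V) : ℕ := ∑ᶠ v ∈ S, deg G v

/-- The edge boundary ∂(S): edges of `G` with exactly one endpoint in `S`. -/
def bdry (G : SimpleGraph V) (S : Set V) : Set (Sym2 V) :=
  {e | e ∈ G.edgeSet ∧ (∃ u ∈ e, u ∈ S) ∧ (∃ v ∈ e, v ∉ S)}

/-- The closure ∇(S): edges of `G` with at least one endpoint in `S`. -/
def cl (G : SimpleGraph V) (S : Set V) : Set (Sym2 V) :=
  {e | e ∈ G.edgeSet ∧ ∃ u ∈ e, u ∈ S}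

/-- The conductance φ_G(S) = |∂(S)| / vol_G(S). -/
def cond (G : SimpleGraph V) (S : Set V) : ℝ :=
  ((bdry G S).ncard : ℝ) / (vol G S : ℝ)

/-- The conductance φ(G) of the graph: the minimum of φ_G(S) over nonempty S
with vol_G(S) ≤ vol_G(V)/2. -/
def graphCond [Fintype V] (G : SimpleGraph V) : ℝ :=
  sInf {x : ℝ | ∃ S : Set V, S.Nonempty ∧ 2 * vol G S ≤ vol G Set.univ ∧ x = cond G S}

/-- The induced subgraph G[P], realised as a graph on the same vertex set
(vertices outside `P` are isolated). -/
def restrict (G : SimpleGraph V) (P : Set V) : SimpleGraph V where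
  Adj u v := G.Adj u v ∧ u ∈ P ∧ v ∈ P
  symm := ⟨fun _ _ h => ⟨h.1.symm, h.2.2, h.2.1⟩⟩
  loopless := ⟨fun u h => G.irrefl h.1⟩

/-- e(S,T): the number of edges of `G` with one endpoint in `S` and the other in `T \ S`. -/
def eCount (G : SimpleGraph V) (S T : Set V) : ℕ :=
  ({e | e ∈ G.edgeSet ∧ ∃ u v, e = s(u, v) ∧ u ∈ S ∧ v ∈ T \ S}).ncard

/-- φ(S,B) = e(S,B) / ((vol(B∖S)/vol(B)) · e(S, V∖B)). -/
def condPair (G : SimpleGraph V) (S B : Set V) : ℝ :=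
  (eCount G S B : ℝ) /
    (((vol G (B \ S) : ℝ) / (vol G B : ℝ)) * (eCount G S (Set.univ \ B) : ℝ))

/-- An edge is monochromatic under a colouring if all its endpoints get the same colour. -/
def Mono {q : ℕ} (χ : V → Fin q) (e : Sym2 V) : Prop :=
  ∀ u ∈ e, ∀ v ∈ e, χ u = χ v

/-- The number of edges in `F` that are monochromatic under `χ`. -/
def monoCount {q : ℕ} (χ : V → Fin q) (F : Set (Sym2 V)) : ℕ :=
  {e ∈ F | Mono χ e}.ncard

/-- m_G(χ): the number of monochromatic edges of `G` under `χ`. -/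
def mG {q : ℕ} (G : SimpleGraph V) (χ : V → Fin q) : ℕ := monoCount χ G.edgeSet

/-- The q-colour Potts model partition function. -/
def Z [Fintype V] [DecidableEq V] (G : SimpleGraph V) (q : ℕ) (β : ℝ) : ℝ :=
  ∑ ω : V → Fin q, Real.exp (β * (mG G ω : ℝ))

/-- P_1, …, P_ℓ form a partition of the vertex set. -/
def IsPartition {ℓ : ℕ} (P : Fin ℓ → Set V) : Prop :=
  (∀ i j : Fin ℓ, i ≠ j → Disjoint (P i) (P j)) ∧ (⋃ i, P i) = Set.univ

/-- A set is small (w.r.t. the partition P) if |S ∩ P i| ≤ |P i|/2 for all i. -/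
def Small {ℓ : ℕ} (P : Fin ℓ → Set V) (S : Set V) : Prop :=
  ∀ i, ((S ∩ P i).ncard : ℝ) ≤ ((P i).ncard : ℝ) / 2

/-- A set U is sparse if the vertex set of every connected component of G[U] is small. -/
def Sparse {ℓ : ℕ} (G : SimpleGraph V) (P : Fin ℓ → Set V) (U : Set V) : Prop :=
  ∀ u ∈ U, Small P {v | (restrict G U).Reachable u v}

/-- Every `S ⊆ P i` with `|S| ≤ |P i|/2` satisfies `|∂_{G[P i]}(S)| ≥ α |S|`. -/
def PartExpansion {ℓ : ℕ} (G : SimpleGraph V) (P : Fin ℓ → Set V) (α : ℝ) : Prop :=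
  ∀ i, ∀ S ⊆ P i, (S.ncard : ℝ) ≤ ((P i).ncard : ℝ) / 2 →
    α * (S.ncard : ℝ) ≤ ((bdry (restrict G (P i)) S).ncard : ℝ)

/-- A ground state: a colouring constant on each part of the partition. -/
def GroundState {q ℓ : ℕ} (P : Fin ℓ → Set V) (ψ : V → Fin q) : Prop :=
  ∀ i : Fin ℓ, ∀ u ∈ P i, ∀ v ∈ P i, ψ u = ψ v

/-- A state ω is close to a ground state ψ if on each part, more than half of the
vertices agree with ψ. -/
def CloseTo {q ℓ : ℕ} (P : Fin ℓ → Set V) (ω ψ : V → Fin q) : Prop :=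
  ∀ i : Fin ℓ, ((P i).ncard : ℝ) / 2 < ((P i ∩ {v | ω v = ψ v}).ncard : ℝ)

/-- Z*: the contribution to Z from states close to some ground state. -/
def Zstar [Fintype V] [DecidableEq V] {ℓ : ℕ} (G : SimpleGraph V) (P : Fin ℓ → Set V)
    (q : ℕ) (β : ℝ) : ℝ :=
  ∑ ω : V → Fin q,
    if ∃ ψ : V → Fin q, GroundState P ψ ∧ CloseTo P ω ψ then Real.exp (β * (mG G ω : ℝ)) else 0

/-- The colouring of V that colours γ by `lam` and everything else by `ψ`. -/
def combine {q : ℕ} (γ : Set V) (ψ : V → Fin q) (lam : γ → Fin q) : V → Fin q :=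
  fun v => if h : v ∈ γ then lam ⟨v, h⟩ else ψ v

/-- m_G(ψ, γ, λ): the number of edges of ∇(γ) that are monochromatic when γ is
coloured by λ and all other vertices by ψ. -/
def mRes {q : ℕ} (G : SimpleGraph V) (γ : Set V) (ψ : V → Fin q) (lam : γ → Fin q) : ℕ :=
  monoCount (combine γ ψ lam) (cl G γ)

/-- A polymer: a nonempty small set inducing a connected subgraph. -/
def Polymer {ℓ : ℕ} (G : SimpleGraph V) (P : Fin ℓ → Set V) (γ : Set V) : Prop :=
  γ.Nonempty ∧ (G.induce γ).Connected ∧ Small P γ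

/-- Two polymers are compatible if they are disjoint with disjoint edge boundaries. -/
def Compatible (G : SimpleGraph V) (γ γ' : Set V) : Prop :=
  Disjoint γ γ' ∧ Disjoint (bdry G γ) (bdry G γ')

/-- The family of vertex sets of connected components of G[U]. -/
def components (G : SimpleGraph V) (U : Set V) : Set (Set V) :=
  {C | ∃ u ∈ U, C = {v | (restrict G U).Reachable u v}}

lemma restrict_le (G : SimpleGraph V) (A : Set V) : restrict G A ≤ G := fun _ _ h => h.1

lemma restrict_le_restrict {G G' : SimpleGraph V} {A B : Set V} (hG : G ≤ G') (hAB : A ⊆ B) :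
    restrict G A ≤ restrict G' B :=
  fun _ _ h => ⟨hG h.1, hAB h.2.1, hAB h.2.2⟩

section Boundary

variable {H : SimpleGraph V} {A B : Set V}

lemma bdry_subset_bdry_union (hAB : ∀ a ∈ A, ∀ b ∈ B, ¬H.Adj a b) :
    bdry H A ⊆ bdry H (A ∪ B) := by
  rintro e ⟨he, ⟨a, hae, ha⟩, ⟨v, hve, hv⟩⟩
  refine ⟨he, ⟨a, hae, .inl ha⟩, ⟨v, hve, ?_⟩⟩
  rintro (hvA | hvB)
  · exact hv hvA
  · exact hAB a ha v hvB
      (H.adj_of_mem_incidenceSet (ne_of_mem_of_not_mem ha hv) ⟨he, hae⟩ ⟨he, hve⟩)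

lemma disjoint_bdry (hd : Disjoint A B) (hAB : ∀ a ∈ A, ∀ b ∈ B, ¬H.Adj a b) :
    Disjoint (bdry H A) (bdry H B) := by
  rw [Set.disjoint_left]
  rintro e ⟨he, ⟨a, hae, ha⟩, -⟩ ⟨-, ⟨b, hbe, hb⟩, -⟩
  exact hAB a ha b hb (H.adj_of_mem_incidenceSet (hd.ne_of_mem ha hb) ⟨he, hae⟩ ⟨he, hbe⟩)

lemma ncard_bdry_add_ncard_bdry_le [Finite V] (hd : Disjoint A B)
    (hAB : ∀ a ∈ A, ∀ b ∈ B, ¬H.Adj a b) :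
    (bdry H A).ncard + (bdry H B).ncard ≤ (bdry H (A ∪ B)).ncard := by
  have hBA : ∀ b ∈ B, ∀ a ∈ A, ¬H.Adj b a := fun b hb a ha h => hAB a ha b hb h.symm
  rw [← Set.ncard_union_eq (disjoint_bdry hd hAB)]
  refine Set.ncard_le_ncard (Set.union_subset (bdry_subset_bdry_union hAB) ?_)
  rw [Set.union_comm]
  exact bdry_subset_bdry_union hBA

end Boundary

lemma mem_of_adj_of_reachable {H : SimpleGraph V} {W : Set V} {u x y : V}
    (hx : x ∈ {v ∈ W | (restrict H W).Reachable u v}) (hy : y ∈ W) (hxy : H.Adj x y) :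
    y ∈ {v ∈ W | (restrict H W).Reachable u v} :=
  ⟨hy, hx.2.trans (SimpleGraph.Adj.reachable ⟨hxy, hx.1, hy⟩)⟩

/- Peel off the component `C` of some vertex: there are no edges between `C` and `W \ C`, so
their boundaries are disjoint parts of the boundary of `W`, and the remaining components only
shrink. -/
theorem le_ncard_bdry_of_forall_subset_component [Finite V] (H : SimpleGraph V) (α : ℝ)
    {W : Set V}
    (h : ∀ u ∈ W, ∀ S ⊆ {v ∈ W | (restrict H W).Reachable u v},
      α * S.ncard ≤ (bdry H S).ncard) :
    α * W.ncard ≤ (bdry H W).ncard := by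
  induction hn : W.ncard using Nat.strong_induction_on generalizing W with
  | _ n ih =>
  subst hn
  rcases W.eq_empty_or_nonempty with rfl | ⟨u, hu⟩
  · simp
  set C := {v ∈ W | (restrict H W).Reachable u v}
  have hCW : C ⊆ W := Set.sep_subset _ _
  have hcard : (W \ C).ncard + C.ncard = W.ncard := Set.ncard_sdiff_add_ncard_of_subset hCW
  have hCpos : 0 < C.ncard := (Set.ncard_pos).2 ⟨u, hu, .refl u⟩
  have hC : α * C.ncard ≤ (bdry H C).ncard := h u hu C subset_rfl
  have hrest : α * (W \ C).ncard ≤ (bdry H (W \ C)).ncard := by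
    refine ih _ (by omega) (fun v hv S hS => h v hv.1 S (hS.trans ?_)) rfl
    exact fun x hx => ⟨hx.1.1, hx.2.mono (restrict_le_restrict le_rfl Set.sdiff_subset)⟩
  have hsplit : (bdry H C).ncard + (bdry H (W \ C)).ncard ≤ (bdry H W).ncard := by
    have hnoAdj : ∀ a ∈ C, ∀ b ∈ W \ C, ¬H.Adj a b :=
      fun a ha b hb hab => hb.2 (mem_of_adj_of_reachable ha hb.1 hab)
    simpa only [Set.union_sdiff_cancel hCW] using
      ncard_bdry_add_ncard_bdry_le Set.disjoint_sdiff_right hnoAdj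
  calc α * (W.ncard : ℝ) = α * C.ncard + α * (W \ C).ncard := by
        rw [← hcard]; push_cast; ring
    _ ≤ (bdry H C).ncard + (bdry H (W \ C)).ncard := add_le_add hC hrest
    _ ≤ (bdry H W).ncard := by exact_mod_cast hsplit

theorem statement2_general [Fintype V] (G : SimpleGraph V) {ℓ : ℕ} (P : Fin ℓ → Set V)
    (α : ℝ) (hexp : PartExpansion G P α)
    (U : Set V) (hU : Sparse G P U) (i : Fin ℓ) :
    α * ((U ∩ P i).ncard : ℝ) ≤ ((bdry (restrict G (P i)) (U ∩ P i)).ncard : ℝ) := by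
  refine le_ncard_bdry_of_forall_subset_component _ α fun u hu S hS =>
    hexp i S (fun v hv => (hS hv).1.2) ?_
  have hSU : S ⊆ {v | (restrict G U).Reachable u v} ∩ P i := fun v hv =>
    ⟨(hS hv).2.mono (restrict_le_restrict (restrict_le G _) Set.inter_subset_left), (hS hv).1.2⟩
  exact (Nat.cast_le.mpr (Set.ncard_le_ncard hSU)).trans (hU u hu.1 i)

/-- sparse sets have the partition expansion property. -/
theorem statement2 [Fintype V] (G : SimpleGraph V) {ℓ : ℕ} (P : Fin ℓ → Set V)
    (hP : IsPartition P) (α : ℝ) (hα : 0 < α) (hexp : PartExpansion G P α)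
    (U : Set V) (hU : Sparse G P U) (i : Fin ℓ) :
    α * ((U ∩ P i).ncard : ℝ) ≤ ((bdry (restrict G (P i)) (U ∩ P i)).ncard : ℝ) :=
  statement2_general G P α hexp U hU i

end Paper

end
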